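/- Let n ≥ 4 with both n and n/2 even. The spectrum of the conjugacy supercommuting graph of the dihedral group D_{2n} consists of -1 with multiplicity 2n-4, the simple eigenvalue n/2 - 1, and the three roots of x³ + (3 - 3n/2)x² + (n²/2 - 5n + 3)x + 5n²/2 - 15n/2 + 1 = 0. -/

import Mathlib

open Matrix Polynomial
open scoped Classical

set_option synthInstance.maxHeartbeats 1000000
set_option maxHeartbeats 1600000

/-- Adjacency matrix (over `ℂ`) of the conjugacy supercommuting graph of a group `G`:
distinct vertices `g, h` are adjacent iff they are conjugate, or some element conjugate
to `g` and some element conjugate to `h` are adjacent in the commuting graph of `G`. -/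
noncomputable def cscomAdj (G : Type*) [Group G] : Matrix G G ℂ :=
  Matrix.of fun g h =>
    if g ≠ h ∧ (IsConj g h ∨
        ∃ x y : G, IsConj g x ∧ IsConj h y ∧ x ≠ y ∧ Commute x y) then 1 else 0

namespace CSComAux

open DihedralGroup

variable {n : ℕ}

lemma inv_r (j : ZMod n) : (r j)⁻¹ = r (-j) :=
  inv_eq_of_mul_eq_one_right (by rw [r_mul_r, add_neg_cancel]; rfl)

lemma inv_sr (j : ZMod n) : (sr j)⁻¹ = sr j :=
  inv_eq_of_mul_eq_one_right (by rw [sr_mul_sr, sub_self]; rfl)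

lemma conj_r_r (j i : ZMod n) : r j * r i * (r j)⁻¹ = r i := by
  rw [inv_r, r_mul_r, r_mul_r]; congr 1; ring

lemma conj_sr_r (j i : ZMod n) : sr j * r i * (sr j)⁻¹ = r (-i) := by
  rw [inv_sr, sr_mul_r, sr_mul_sr]; congr 1; ring

lemma conj_r_sr (j i : ZMod n) : r j * sr i * (r j)⁻¹ = sr (i - 2 * j) := by
  rw [inv_r, r_mul_sr, sr_mul_r]; congr 1; ring

lemma conj_sr_sr (j i : ZMod n) : sr j * sr i * (sr j)⁻¹ = sr (2 * j - i) := by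
  rw [inv_sr, sr_mul_sr, r_mul_sr]; congr 1; ring

lemma isConj_r {i : ZMod n} {y : DihedralGroup n} (h : IsConj (r i) y) :
    y = r i ∨ y = r (-i) := by
  rw [isConj_iff] at h
  obtain ⟨c, hc⟩ := h
  rcases c with j | j
  · rw [conj_r_r] at hc; exact Or.inl hc.symm
  · rw [conj_sr_r] at hc; exact Or.inr hc.symm

lemma isConj_sr {i : ZMod n} {y : DihedralGroup n} (h : IsConj (sr i) y) :
    ∃ k, y = sr (i + 2 * k) := by
  rw [isConj_iff] at h
  obtain ⟨c, hc⟩ := h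
  rcases c with j | j
  · exact ⟨-j, by rw [conj_r_sr] at hc; rw [← hc]; congr 1; ring⟩
  · exact ⟨j - i, by rw [conj_sr_sr] at hc; rw [← hc]; congr 1; ring⟩

lemma isConj_sr_of (i k : ZMod n) : IsConj (sr i) (sr (i + 2 * k)) :=
  isConj_iff.mpr ⟨r (-k), by rw [conj_r_sr]; congr 1; ring⟩

lemma r_commute {i : ZMod n} (h2 : 2 * i = 0) (x : DihedralGroup n) :
    Commute (r i) x := by
  have hi : -i = i := by linear_combination -h2
  rcases x with j | j
  · show r i * r j = r j * r i
    rw [r_mul_r, r_mul_r, add_comm]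
  · show r i * sr j = sr j * r i
    rw [r_mul_sr, sr_mul_r, sub_eq_add_neg, hi]

/-- parity ring hom -/
def pr (hd : 2 ∣ n) : ZMod n →+* ZMod 2 := ZMod.castHom hd (ZMod 2)

lemma pr_natCast (hd : 2 ∣ n) (k : ℕ) : pr hd (k : ZMod n) = (k : ZMod 2) :=
  map_natCast _ k

lemma natCast_val' [NeZero n] (a : ZMod n) : ((a.val : ℕ) : ZMod n) = a := by
  rw [ZMod.natCast_val, ZMod.cast_id]

lemma pr_val [NeZero n] (hd : 2 ∣ n) (a : ZMod n) :
    pr hd a = ((a.val : ℕ) : ZMod 2) := by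
  conv_lhs => rw [← natCast_val' a]
  rw [pr_natCast]

lemma pr_eq_zero_iff [NeZero n] (hd : 2 ∣ n) (a : ZMod n) :
    pr hd a = 0 ↔ 2 ∣ a.val := by
  rw [pr_val, ZMod.natCast_eq_zero_iff]

lemma two_mul_half [NeZero n] (heven : Even n) :
    (2 * ((n / 2 : ℕ) : ZMod n) : ZMod n) = 0 := by
  have : ((2 * (n / 2) : ℕ) : ZMod n) = 0 := by
    rw [Nat.mul_div_cancel' heven.two_dvd, ZMod.natCast_self]
  rw [← this]; push_cast; ring

lemma half_ne_zero [NeZero n] (hn : 4 ≤ n) : ((n / 2 : ℕ) : ZMod n) ≠ 0 := by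
  intro h
  rw [ZMod.natCast_eq_zero_iff] at h
  have hdvd := h
  have := Nat.le_of_dvd (by omega) hdvd
  omega

lemma two_mul_eq_zero [NeZero n] (heven : Even n) {a : ZMod n} (h : 2 * a = 0) :
    a = 0 ∨ a = ((n / 2 : ℕ) : ZMod n) := by
  have hd := heven.two_dvd
  have ha := natCast_val' a
  rw [← ha, ← Nat.cast_ofNat, ← Nat.cast_mul, ZMod.natCast_eq_zero_iff] at h
  have hlt := ZMod.val_lt a
  obtain ⟨c, hc⟩ := h
  have hc2 : c < 2 := by
    by_contra hcc
    push_neg at hcc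
    have := Nat.mul_le_mul_left n hcc
    omega
  interval_cases c
  · left; rw [← ha]; have : a.val = 0 := by omega
    rw [this]; simp
  · right; rw [← ha]; have : a.val = n / 2 := by omega
    rw [this]

lemma pr_half [NeZero n] (heven : Even n) (heven2 : Even (n / 2)) :
    pr heven.two_dvd ((n / 2 : ℕ) : ZMod n) = 0 := by
  rw [pr_natCast, ZMod.natCast_eq_zero_iff]
  exact heven2.two_dvd

lemma pr_eq_zero_of [NeZero n] (heven : Even n) (heven2 : Even (n / 2)) {a : ZMod n}
    (h : 2 * a = 0) : pr heven.two_dvd a = 0 := by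
  rcases two_mul_eq_zero heven h with rfl | rfl
  · simp
  · exact pr_half heven heven2

lemma exists_two_mul [NeZero n] (hd : 2 ∣ n) {a : ZMod n} (h : pr hd a = 0) :
    ∃ b, a = 2 * b := by
  rw [pr_eq_zero_iff] at h
  refine ⟨((a.val / 2 : ℕ) : ZMod n), ?_⟩
  have h2 : 2 * (a.val / 2) = a.val := Nat.mul_div_cancel' h
  rw [← Nat.cast_ofNat, ← Nat.cast_mul, h2, natCast_val']


def cls (heven : Even n) : DihedralGroup n → Fin 4
  | .r i => if 2 * i = 0 then 0 else 1
  | .sr i => if pr heven.two_dvd i = 0 then 2 else 3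

@[simp] lemma cls_r (heven : Even n) (i : ZMod n) :
    cls heven (r i) = if 2 * i = 0 then 0 else 1 := rfl

@[simp] lemma cls_sr (heven : Even n) (i : ZMod n) :
    cls heven (sr i) = if pr heven.two_dvd i = 0 then 2 else 3 := rfl

lemma cls_isConj [NeZero n] (heven : Even n) {g h : DihedralGroup n}
    (hc : IsConj g h) : cls heven g = cls heven h := by
  rcases g with i | i
  · rcases isConj_r hc with rfl | rfl
    · rfl
    · have h2 : (2 * (-i) = 0) ↔ (2 * i = 0) := by
        constructor <;> intro h <;> linear_combination -h
      simp only [cls_r]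
      by_cases hz : 2 * i = 0
      · rw [if_pos hz, if_pos (h2.mpr hz)]
      · rw [if_neg hz, if_neg (fun hh => hz (h2.mp hh))]
  · obtain ⟨k, rfl⟩ := isConj_sr hc
    have hpr : pr heven.two_dvd (i + 2 * k) = pr heven.two_dvd i := by
      rw [map_add, _root_.map_mul]
      have : pr heven.two_dvd 2 = 0 := by
        rw [map_ofNat]; decide
      rw [this, zero_mul, add_zero]
    simp only [cls_sr, hpr]

lemma adj_iff [NeZero n] (hn : 4 ≤ n) (heven : Even n) (heven2 : Even (n / 2))
    {g h : DihedralGroup n} (hgh : g ≠ h) :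
    (IsConj g h ∨ ∃ x y : DihedralGroup n, IsConj g x ∧ IsConj h y ∧ x ≠ y ∧ Commute x y)
      ↔ (cls heven g = 0 ∨ cls heven h = 0 ∨ cls heven g = cls heven h) := by
  constructor
  · rintro (hc | ⟨x, y, hgx, hhy, hxy, hcom⟩)
    · exact Or.inr (Or.inr (cls_isConj heven hc))
    · rw [cls_isConj heven hgx, cls_isConj heven hhy]
      clear hgx hhy hgh
      rcases x with a | a <;> rcases y with b | b
      · by_cases h2a : 2 * a = 0
        · left; simp [h2a]
        · by_cases h2b : 2 * b = 0
          · right; left; simp [h2b]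
          · right; right; simp [h2a, h2b]
      · left
        have hcom' : b - a = b + a := by
          have := hcom
          rw [Commute, SemiconjBy, r_mul_sr, sr_mul_r] at this
          exact sr.inj this
        have h2a : 2 * a = 0 := by linear_combination -hcom'
        simp [h2a]
      · right; left
        have hcom' : a + b = a - b := by
          have := hcom
          rw [Commute, SemiconjBy, sr_mul_r, r_mul_sr] at this
          exact sr.inj this
        have h2b : 2 * b = 0 := by linear_combination hcom'
        simp [h2b]
      · right; right
        have hcom' : b - a = a - b := by
          have := hcom
          rw [Commute, SemiconjBy, sr_mul_sr, sr_mul_sr] at this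
          exact r.inj this
        have h2 : 2 * (b - a) = 0 := by linear_combination hcom'
        have hpr := pr_eq_zero_of heven heven2 h2
        rw [map_sub, sub_eq_zero] at hpr
        simp only [cls_sr, hpr]
  · rintro (h0 | h0 | h0)
    · obtain ⟨i, rfl, h2⟩ : ∃ i, g = r i ∧ 2 * i = 0 := by
        rcases g with i | i
        · refine ⟨i, rfl, ?_⟩
          by_contra hne
          simp [hne] at h0
        · exfalso; simp only [cls_sr] at h0
          split_ifs at h0 <;> exact absurd h0 (by decide)
      exact Or.inr ⟨r i, h, IsConj.refl _, IsConj.refl _, hgh, r_commute h2 h⟩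
    · obtain ⟨j, rfl, h2⟩ : ∃ j, h = r j ∧ 2 * j = 0 := by
        rcases h with j | j
        · refine ⟨j, rfl, ?_⟩
          by_contra hne
          simp [hne] at h0
        · exfalso; simp only [cls_sr] at h0
          split_ifs at h0 <;> exact absurd h0 (by decide)
      exact Or.inr ⟨g, r j, IsConj.refl _, IsConj.refl _, hgh, (r_commute h2 g).symm⟩
    · rcases g with i | i <;> rcases h with j | j
      · refine Or.inr ⟨r i, r j, IsConj.refl _, IsConj.refl _, hgh, ?_⟩
        show r i * r j = r j * r i
        rw [r_mul_r, r_mul_r, add_comm]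
      · exfalso
        simp only [cls_r, cls_sr] at h0
        split_ifs at h0 <;> exact absurd h0 (by decide)
      · exfalso
        simp only [cls_r, cls_sr] at h0
        split_ifs at h0 <;> exact absurd h0 (by decide)
      · have hpr : pr heven.two_dvd i = pr heven.two_dvd j := by
          simp only [cls_sr] at h0
          by_cases hi : pr heven.two_dvd i = 0 <;> by_cases hj : pr heven.two_dvd j = 0
          · rw [hi, hj]
          · rw [if_pos hi, if_neg hj] at h0; exact absurd h0 (by decide)
          · rw [if_neg hi, if_pos hj] at h0; exact absurd h0 (by decide)
          · have hz : ∀ z : ZMod 2, z ≠ 0 → z = 1 := by decide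
            rw [hz _ hi, hz _ hj]
        have hw2 : 2 * ((n / 2 : ℕ) : ZMod n) = 0 := two_mul_half heven
        have hwne : ((n / 2 : ℕ) : ZMod n) ≠ 0 := half_ne_zero hn
        have hprw : pr heven.two_dvd ((n / 2 : ℕ) : ZMod n) = 0 := pr_half heven heven2
        have hdd : pr heven.two_dvd (i + ((n / 2 : ℕ) : ZMod n) - j) = 0 := by
          rw [map_sub, map_add, hpr, hprw, add_zero, sub_self]
        obtain ⟨b, hb⟩ := exists_two_mul heven.two_dvd hdd
        refine Or.inr ⟨sr i, sr (i + ((n / 2 : ℕ) : ZMod n)), IsConj.refl _, ?_, ?_, ?_⟩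
        · have hjb : i + ((n / 2 : ℕ) : ZMod n) = j + 2 * b := by linear_combination hb
          rw [hjb]; exact isConj_sr_of j b
        · intro hh
          have := sr.inj hh
          exact hwne (by linear_combination -this)
        · show sr i * sr (i + _) = sr (i + _) * sr i
          rw [sr_mul_sr, sr_mul_sr]
          congr 1
          linear_combination hw2


/-- the sum-splitting equiv -/
def dEquiv : ZMod n ⊕ ZMod n ≃ DihedralGroup n where
  toFun x := Sum.elim r sr x
  invFun g := match g with
    | .r j => Sum.inl j
    | .sr j => Sum.inr j
  left_inv := by rintro (x | x) <;> rfl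
  right_inv := by rintro (x | x) <;> rfl

lemma sum_split [NeZero n] (f : DihedralGroup n → ℂ) :
    ∑ g, f g = (∑ i : ZMod n, f (r i)) + ∑ i : ZMod n, f (sr i) := by
  rw [← Equiv.sum_comp dEquiv f, Fintype.sum_sum_type]
  rfl

lemma card_twoTorsion [NeZero n] (hn : 4 ≤ n) (heven : Even n) :
    (Finset.univ.filter fun i : ZMod n => 2 * i = 0).card = 2 := by
  have : (Finset.univ.filter fun i : ZMod n => 2 * i = 0)
      = {0, ((n / 2 : ℕ) : ZMod n)} := by
    ext a
    simp only [Finset.mem_filter, Finset.mem_univ, true_and, Finset.mem_insert,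
      Finset.mem_singleton]
    constructor
    · exact two_mul_eq_zero heven
    · rintro (rfl | rfl)
      · simp
      · exact two_mul_half heven
  rw [this, Finset.card_insert_of_notMem (by simpa using (half_ne_zero hn).symm),
    Finset.card_singleton]

lemma card_even [NeZero n] (heven : Even n) :
    (Finset.univ.filter fun i : ZMod n => pr heven.two_dvd i = 0).card = n / 2 := by
  have hd := heven.two_dvd
  rw [show n / 2 = (Finset.range (n / 2)).card from (Finset.card_range _).symm]
  refine Finset.card_bij' (fun a _ => a.val / 2) (fun k _ => ((2 * k : ℕ) : ZMod n))
    ?_ ?_ ?_ ?_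
  · intro a ha
    simp only [Finset.mem_filter, Finset.mem_univ, true_and, pr_eq_zero_iff] at ha
    have := ZMod.val_lt a
    simp only [Finset.mem_range]
    omega
  · intro k hk
    simp only [Finset.mem_range] at hk
    simp only [Finset.mem_filter, Finset.mem_univ, true_and, pr_natCast]
    rw [ZMod.natCast_eq_zero_iff]
    exact ⟨k, rfl⟩
  · intro a ha
    simp only [Finset.mem_filter, Finset.mem_univ, true_and, pr_eq_zero_iff] at ha
    show ((2 * (a.val / 2) : ℕ) : ZMod n) = a
    rw [Nat.mul_div_cancel' ha, natCast_val']
  · intro k hk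
    simp only [Finset.mem_range] at hk
    show ((2 * k : ℕ) : ZMod n).val / 2 = k
    rw [ZMod.val_cast_of_lt (by omega)]
    omega

/-- column-indicator matrix of the class map -/
noncomputable def Pm (heven : Even n) : Matrix (DihedralGroup n) (Fin 4) ℂ :=
  of fun g i => if cls heven g = i then 1 else 0

/-- quotient pattern matrix -/
noncomputable def cm : Matrix (Fin 4) (Fin 4) ℂ :=
  of fun i j => if i = 0 ∨ j = 0 ∨ i = j then 1 else 0

/-- class sizes -/
noncomputable def dv (n : ℕ) : Fin 4 → ℂ := ![2, (n : ℂ) - 2, (n : ℂ) / 2, (n : ℂ) / 2]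

lemma adj_eq [NeZero n] (hn : 4 ≤ n) (heven : Even n) (heven2 : Even (n / 2)) :
    cscomAdj (DihedralGroup n) = Pm heven * cm * (Pm heven)ᵀ - 1 := by
  have hPc : ∀ (g : DihedralGroup n) (j : Fin 4),
      (Pm heven * cm) g j = cm (cls heven g) j := by
    intro g j
    rw [mul_apply]
    rw [Finset.sum_eq_single (cls heven g)]
    · simp [Pm]
    · intro b _ hb
      simp [Pm, hb.symm]
    · simp
  have hrow : ∀ g h : DihedralGroup n,
      (Pm heven * cm * (Pm heven)ᵀ) g h = cm (cls heven g) (cls heven h) := by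
    intro g h
    rw [mul_apply]
    rw [Finset.sum_eq_single (cls heven h)]
    · rw [hPc]; simp [Pm]
    · intro b _ hb
      simp [Pm, transpose_apply, hb.symm]
    · simp
  ext g h
  rw [Matrix.sub_apply, hrow, one_apply]
  by_cases hgh : g = h
  · subst hgh
    have h1 : cscomAdj (DihedralGroup n) g g = 0 := by
      simp [cscomAdj]
    rw [h1, if_pos rfl]
    have : cm (cls heven g) (cls heven g) = 1 := by
      simp [cm]
    rw [this]; ring
  · rw [if_neg hgh, sub_zero]
    have hiff := adj_iff hn heven heven2 hgh
    simp only [cscomAdj, of_apply]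
    by_cases hadj : IsConj g h ∨ ∃ x y : DihedralGroup n,
        IsConj g x ∧ IsConj h y ∧ x ≠ y ∧ Commute x y
    · rw [if_pos ⟨hgh, hadj⟩]
      have hp := hiff.mp hadj
      have : cm (cls heven g) (cls heven h) = 1 := by
        simp only [cm, of_apply]
        rw [if_pos]
        rcases hp with h' | h' | h'
        · exact Or.inl h'
        · exact Or.inr (Or.inl h')
        · exact Or.inr (Or.inr h')
      rw [this]
    · rw [if_neg (fun hc => hadj hc.2)]
      have : cm (cls heven g) (cls heven h) = 0 := by
        simp only [cm, of_apply]
        rw [if_neg]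
        intro hp
        exact hadj (hiff.mpr hp)
      rw [this]

lemma PtP [NeZero n] (hn : 4 ≤ n) (heven : Even n) :
    (Pm heven)ᵀ * Pm heven = diagonal (dv n) := by
  have hsum : ∀ i : Fin 4, ∑ g : DihedralGroup n,
      (if cls heven g = i then (1 : ℂ) else 0) = ((Finset.univ.filter
        fun g : DihedralGroup n => cls heven g = i).card : ℂ) := by
    intro i; rw [Finset.sum_boole]
  ext i j
  rw [mul_apply]
  by_cases hij : i = j
  · subst hij
    have h1 : ∀ g : DihedralGroup n, (Pm heven)ᵀ i g * Pm heven g i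
        = if cls heven g = i then (1 : ℂ) else 0 := by
      intro g
      simp only [transpose_apply, Pm, of_apply]
      split_ifs <;> simp
    rw [Finset.sum_congr rfl fun g _ => h1 g, sum_split, diagonal_apply_eq]
    have hcardU : Fintype.card (ZMod n) = n := ZMod.card n
    have hc1 : (Finset.univ.filter fun a : ZMod n => ¬ 2 * a = 0).card = n - 2 := by
      have htot := Finset.card_filter_add_card_filter_not
        (s := (Finset.univ : Finset (ZMod n))) (fun a : ZMod n => 2 * a = 0)
      rw [card_twoTorsion hn heven] at htot
      rw [Finset.card_univ, hcardU] at htot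
      omega
    have hc3 : (Finset.univ.filter
        fun a : ZMod n => ¬ pr heven.two_dvd a = 0).card = n / 2 := by
      have htot := Finset.card_filter_add_card_filter_not
        (s := (Finset.univ : Finset (ZMod n))) (fun a : ZMod n => pr heven.two_dvd a = 0)
      rw [card_even heven] at htot
      rw [Finset.card_univ, hcardU] at htot
      have h2n := heven.two_dvd
      omega
    have hhalf : ((n / 2 : ℕ) : ℂ) = (n : ℂ) / 2 :=
      Nat.cast_div heven.two_dvd (by norm_num)
    clear h1
    rcases (show i = 0 ∨ i = 1 ∨ i = 2 ∨ i = 3 by revert i; decide)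
      with rfl | rfl | rfl | rfl
    · have e1 : ∀ a : ZMod n, (if cls heven (r a) = (0 : Fin 4) then (1 : ℂ) else 0)
          = if 2 * a = 0 then 1 else 0 := by
        intro a; simp only [cls_r]; by_cases h : 2 * a = 0 <;> simp [h]
      have e2 : ∀ a : ZMod n,
          (if cls heven (sr a) = (0 : Fin 4) then (1 : ℂ) else 0) = 0 := by
        intro a; simp only [cls_sr]
        by_cases h : pr heven.two_dvd a = 0 <;> simp [h]
      rw [Finset.sum_congr rfl fun a _ => e1 a, Finset.sum_congr rfl fun a _ => e2 a,
        Finset.sum_boole, card_twoTorsion hn heven, Finset.sum_const_zero, add_zero]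
      norm_num [dv]
    · have e1 : ∀ a : ZMod n, (if cls heven (r a) = (1 : Fin 4) then (1 : ℂ) else 0)
          = if ¬ 2 * a = 0 then 1 else 0 := by
        intro a; simp only [cls_r]; by_cases h : 2 * a = 0 <;> simp [h]
      have e2 : ∀ a : ZMod n,
          (if cls heven (sr a) = (1 : Fin 4) then (1 : ℂ) else 0) = 0 := by
        intro a; simp only [cls_sr]
        by_cases h : pr heven.two_dvd a = 0 <;> simp [h]
      rw [Finset.sum_congr rfl fun a _ => e1 a, Finset.sum_congr rfl fun a _ => e2 a,
        Finset.sum_boole, hc1, Finset.sum_const_zero, add_zero]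
      have : ((n - 2 : ℕ) : ℂ) = (n : ℂ) - 2 := by
        rw [Nat.cast_sub (by omega)]; norm_num
      rw [this]; norm_num [dv]
    · have e1 : ∀ a : ZMod n,
          (if cls heven (r a) = (2 : Fin 4) then (1 : ℂ) else 0) = 0 := by
        intro a; simp only [cls_r]; by_cases h : 2 * a = 0 <;> simp [h]
      have e2 : ∀ a : ZMod n, (if cls heven (sr a) = (2 : Fin 4) then (1 : ℂ) else 0)
          = if pr heven.two_dvd a = 0 then 1 else 0 := by
        intro a; simp only [cls_sr]
        by_cases h : pr heven.two_dvd a = 0 <;> simp [h]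
      rw [Finset.sum_congr rfl fun a _ => e1 a, Finset.sum_congr rfl fun a _ => e2 a,
        Finset.sum_boole, card_even heven, Finset.sum_const_zero, zero_add, hhalf]
      norm_num [dv]; rfl
    · have e1 : ∀ a : ZMod n,
          (if cls heven (r a) = (3 : Fin 4) then (1 : ℂ) else 0) = 0 := by
        intro a; simp only [cls_r]; by_cases h : 2 * a = 0 <;> simp [h]
      have e2 : ∀ a : ZMod n, (if cls heven (sr a) = (3 : Fin 4) then (1 : ℂ) else 0)
          = if ¬ pr heven.two_dvd a = 0 then 1 else 0 := by
        intro a; simp only [cls_sr]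
        by_cases h : pr heven.two_dvd a = 0 <;> simp [h]
      rw [Finset.sum_congr rfl fun a _ => e1 a, Finset.sum_congr rfl fun a _ => e2 a,
        Finset.sum_boole, hc3, Finset.sum_const_zero, zero_add, hhalf]
      norm_num [dv]; rfl
  · rw [diagonal_apply_ne _ hij]
    apply Finset.sum_eq_zero
    intro g _
    simp only [transpose_apply, Pm, of_apply]
    split_ifs with h1 h2
    · exact absurd (h1 ▸ h2) (fun hh => hij (h1.symm.trans h2))
    · simp
    · simp
    · simp



lemma det_smul_one_sub_mul {K : Type*} [Field K] {m k : Type*} [Fintype m] [Fintype k]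
    [DecidableEq m] [DecidableEq k] (hk : Fintype.card k ≤ Fintype.card m)
    {u : K} (hu : u ≠ 0) (A : Matrix m k K) (Bm : Matrix k m K) :
    (u • (1 : Matrix m m K) - A * Bm).det
      = u ^ (Fintype.card m - Fintype.card k) * (u • (1 : Matrix k k K) - Bm * A).det := by
  have hcanc : u * -u⁻¹ = -1 := by field_simp
  have h1 : u • (1 : Matrix m m K) - A * Bm = u • (1 + A * ((-u⁻¹) • Bm)) := by
    rw [smul_add, Matrix.mul_smul, smul_smul, hcanc, neg_one_smul, ← sub_eq_add_neg]
  have h2 : u • (1 : Matrix k k K) - Bm * A = u • (1 + ((-u⁻¹) • Bm) * A) := by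
    rw [smul_add, Matrix.smul_mul, smul_smul, hcanc, neg_one_smul, ← sub_eq_add_neg]
  rw [h1, h2, det_smul, det_smul, det_one_add_mul_comm, ← mul_assoc, ← pow_add,
    Nat.sub_add_cancel hk]

lemma charpoly_key {G : Type*} [Fintype G] [DecidableEq G]
    (U : Matrix G (Fin 4) ℂ) (B : Matrix (Fin 4) (Fin 4) ℂ) (h4 : 4 ≤ Fintype.card G) :
    (U * B * Uᵀ - 1).charpoly
      = (X + 1) ^ (Fintype.card G - 4) *
        (((X + 1 : ℂ[X])) • (1 : Matrix (Fin 4) (Fin 4) ℂ[X]) - (B * (Uᵀ * U)).map C).det := by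
  classical
  have hinj : Function.Injective (algebraMap ℂ[X] (RatFunc ℂ)) := IsFractionRing.injective _ _
  apply hinj
  set φ : ℂ[X] →+* RatFunc ℂ := (algebraMap ℂ[X] (RatFunc ℂ) : ℂ[X] →+* RatFunc ℂ) with hφ
  set ψ : ℂ →+* RatFunc ℂ := φ.comp C with hψ
  have hXne : (X + 1 : ℂ[X]) ≠ 0 := by
    intro h
    have := congrArg (fun p : ℂ[X] => p.eval 0) h
    simp at this
  have hu : φ (X + 1) ≠ 0 := fun h => hXne (hinj (by simpa using h))
  have hch : charmatrix (U * B * Uᵀ - 1)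
      = ((X + 1 : ℂ[X])) • (1 : Matrix G G ℂ[X]) - (U * B * Uᵀ).map C := by
    apply Matrix.ext
    intro i j
    by_cases h : i = j
    · subst h
      simp only [charmatrix_apply, Matrix.sub_apply, Matrix.smul_apply, Matrix.one_apply_eq,
        Matrix.map_apply, diagonal_apply_eq, map_sub, _root_.map_one,
        smul_eq_mul, mul_one]
      ring
    · simp only [charmatrix_apply, Matrix.sub_apply, Matrix.smul_apply, Matrix.one_apply_ne h,
        Matrix.map_apply, diagonal_apply_ne _ h, map_sub, map_zero,
        smul_eq_mul, mul_zero]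
      ring
  set U' : Matrix G (Fin 4) (RatFunc ℂ) := U.map ⇑ψ with hU'
  set B' : Matrix (Fin 4) (Fin 4) (RatFunc ℂ) := B.map ⇑ψ with hB'
  have hprod : U' * (B' * U'ᵀ) = (U * B * Uᵀ).map ⇑ψ := by
    rw [Matrix.mul_assoc, Matrix.map_mul, Matrix.map_mul, Matrix.transpose_map]
  have hprod2 : B' * (U'ᵀ * U') = (B * (Uᵀ * U)).map ⇑ψ := by
    rw [Matrix.map_mul, Matrix.map_mul, Matrix.transpose_map]
  have hentG : (((X + 1 : ℂ[X])) • (1 : Matrix G G ℂ[X]) - (U * B * Uᵀ).map C).map ⇑φ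
      = φ (X + 1) • (1 : Matrix G G (RatFunc ℂ)) - (U * B * Uᵀ).map ⇑ψ := by
    apply Matrix.ext
    intro i j
    by_cases h : i = j
    · subst h
      simp only [Matrix.map_apply, Matrix.sub_apply, Matrix.smul_apply, Matrix.one_apply_eq,
        smul_eq_mul, mul_one, map_sub, hψ, RingHom.comp_apply]
    · simp only [Matrix.map_apply, Matrix.sub_apply, Matrix.smul_apply, Matrix.one_apply_ne h,
        smul_eq_mul, mul_zero, map_sub, map_zero, hψ, RingHom.comp_apply]
  have hent4 : (((X + 1 : ℂ[X])) • (1 : Matrix (Fin 4) (Fin 4) ℂ[X])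
        - (B * (Uᵀ * U)).map C).map ⇑φ
      = φ (X + 1) • (1 : Matrix (Fin 4) (Fin 4) (RatFunc ℂ)) - (B * (Uᵀ * U)).map ⇑ψ := by
    apply Matrix.ext
    intro i j
    by_cases h : i = j
    · subst h
      simp only [Matrix.map_apply, Matrix.sub_apply, Matrix.smul_apply, Matrix.one_apply_eq,
        smul_eq_mul, mul_one, map_sub, hψ, RingHom.comp_apply]
    · simp only [Matrix.map_apply, Matrix.sub_apply, Matrix.smul_apply, Matrix.one_apply_ne h,
        smul_eq_mul, mul_zero, map_sub, map_zero, hψ, RingHom.comp_apply]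
  have hcp : (U * B * Uᵀ - 1).charpoly = (charmatrix (U * B * Uᵀ - 1)).det := rfl
  rw [hcp, _root_.map_mul, map_pow, RingHom.map_det, RingHom.map_det, hch]
  rw [RingHom.mapMatrix_apply, RingHom.mapMatrix_apply, hentG, hent4, ← hprod2, ← hprod]
  rw [det_smul_one_sub_mul (by simpa using h4) hu U' (B' * U'ᵀ), Matrix.mul_assoc,
    Fintype.card_fin]

lemma small_det (n : ℕ) :
    (((X + 1 : ℂ[X])) • (1 : Matrix (Fin 4) (Fin 4) ℂ[X]) - (cm * diagonal (dv n)).map C).det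
      = (X - C ((n : ℂ) / 2 - 1)) *
        (X ^ 3 + C (3 - 3 * (n : ℂ) / 2) * X ^ 2
          + C ((n : ℂ) ^ 2 / 2 - 5 * (n : ℂ) + 3) * X
          + C (5 * (n : ℂ) ^ 2 / 2 - 15 * (n : ℂ) / 2 + 1)) := by
  have hM : (((X + 1 : ℂ[X])) • (1 : Matrix (Fin 4) (Fin 4) ℂ[X])
        - (cm * diagonal (dv n)).map C)
      = !![X + 1 - C 2, -C ((n : ℂ) - 2), -C ((n : ℂ) / 2), -C ((n : ℂ) / 2);
           -C 2, X + 1 - C ((n : ℂ) - 2), 0, 0;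
           -C 2, 0, X + 1 - C ((n : ℂ) / 2), 0;
           -C 2, 0, 0, X + 1 - C ((n : ℂ) / 2)] := by
    apply Matrix.ext
    intro i j
    fin_cases i <;> fin_cases j <;>
      simp [cm, dv, Matrix.mul_diagonal, Matrix.smul_apply, Matrix.one_apply,
        Matrix.map_apply, Matrix.sub_apply, smul_eq_mul, Matrix.cons_val',
        Matrix.cons_val_zero, Matrix.cons_val_one, Matrix.head_cons, Matrix.empty_val',
        Matrix.cons_val_fin_one, Matrix.head_fin_const, Matrix.vecHead, Matrix.vecTail,
        Function.comp]
  rw [hM]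
  have hc0 : (C (2 : ℂ) : ℂ[X]) = 2 := by
    rw [map_ofNat]
  have hc2 : (C ((n : ℂ) - 2) : ℂ[X]) = 2 * C ((n : ℂ) / 2) - 2 := by
    rw [show (n : ℂ) - 2 = 2 * ((n : ℂ) / 2) - 2 by ring]
    simp only [map_sub, _root_.map_mul, map_ofNat]
  have hc3 : (C (3 - 3 * (n : ℂ) / 2) : ℂ[X]) = 3 - 3 * C ((n : ℂ) / 2) := by
    rw [show 3 - 3 * (n : ℂ) / 2 = 3 - 3 * ((n : ℂ) / 2) by ring]
    simp only [map_sub, _root_.map_mul, map_ofNat]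
  have hc4 : (C ((n : ℂ) ^ 2 / 2 - 5 * (n : ℂ) + 3) : ℂ[X])
      = 2 * C ((n : ℂ) / 2) ^ 2 - 10 * C ((n : ℂ) / 2) + 3 := by
    rw [show (n : ℂ) ^ 2 / 2 - 5 * (n : ℂ) + 3
        = 2 * ((n : ℂ) / 2) ^ 2 - 10 * ((n : ℂ) / 2) + 3 by ring]
    simp only [map_add, map_sub, _root_.map_mul, map_pow, map_ofNat]
  have hc5 : (C (5 * (n : ℂ) ^ 2 / 2 - 15 * (n : ℂ) / 2 + 1) : ℂ[X])
      = 10 * C ((n : ℂ) / 2) ^ 2 - 15 * C ((n : ℂ) / 2) + 1 := by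
    rw [show 5 * (n : ℂ) ^ 2 / 2 - 15 * (n : ℂ) / 2 + 1
        = 10 * ((n : ℂ) / 2) ^ 2 - 15 * ((n : ℂ) / 2) + 1 by ring]
    simp only [map_add, map_sub, _root_.map_mul, map_pow, map_ofNat, _root_.map_one]
  have hc6 : (C ((n : ℂ) / 2 - 1) : ℂ[X]) = C ((n : ℂ) / 2) - 1 := by
    rw [map_sub, _root_.map_one]
  rw [hc2, hc3, hc4, hc5, hc6, hc0]
  rw [Matrix.det_succ_row_zero]
  simp [Fin.sum_univ_succ, Matrix.det_fin_three, Fin.succAbove,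
    Matrix.submatrix_apply,
    show Fin.castSucc (2 : Fin 3) = (2 : Fin 4) from rfl,
    show Fin.castSucc (1 : Fin 3) = (1 : Fin 4) from rfl,
    show Fin.castSucc (0 : Fin 3) = (0 : Fin 4) from rfl]
  ring

end CSComAux

/-- For `n ≥ 4` with `n` and `n/2` both even, the spectrum of the conjugacy
supercommuting graph of `D_{2n}` consists of `-1` with multiplicity `2n - 4`, the
simple eigenvalue `n/2 - 1`, and the three roots of
`x³ + (3 - 3n/2)x² + (n²/2 - 5n + 3)x + 5n²/2 - 15n/2 + 1 = 0`. -/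
theorem spectrum_CSCom_dihedral_even_even (n : ℕ) [NeZero n] (hn : 4 ≤ n)
    (heven : Even n) (heven2 : Even (n / 2)) :
    (cscomAdj (DihedralGroup n)).charpoly.roots =
      Multiset.replicate (2 * n - 4) (-1) + {(n : ℂ) / 2 - 1} +
        (X ^ 3 + C (3 - 3 * (n : ℂ) / 2) * X ^ 2
          + C ((n : ℂ) ^ 2 / 2 - 5 * (n : ℂ) + 3) * X
          + C (5 * (n : ℂ) ^ 2 / 2 - 15 * (n : ℂ) / 2 + 1)).roots := by
  rw [CSComAux.adj_eq hn heven heven2,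
    CSComAux.charpoly_key (CSComAux.Pm heven) CSComAux.cm
      (by rw [DihedralGroup.card]; omega),
    CSComAux.PtP hn heven, CSComAux.small_det, DihedralGroup.card]
  set q : ℂ[X] := X ^ 3 + C (3 - 3 * (n : ℂ) / 2) * X ^ 2
      + C ((n : ℂ) ^ 2 / 2 - 5 * (n : ℂ) + 3) * X
      + C (5 * (n : ℂ) ^ 2 / 2 - 15 * (n : ℂ) / 2 + 1) with hqdef
  have hXne : (X + 1 : ℂ[X]) ≠ 0 := by
    intro h
    have := congrArg (fun p : ℂ[X] => p.eval 0) h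
    simp at this
  have hq : q ≠ 0 := by
    intro hq0
    have := congrArg (fun p : ℂ[X] => p.coeff 3) hq0
    simp only [hqdef, coeff_add, coeff_C_mul, coeff_X_pow, coeff_C, coeff_X, coeff_zero] at this
    norm_num at this
  have ha : (X - C ((n : ℂ) / 2 - 1) : ℂ[X]) ≠ 0 := (monic_X_sub_C _).ne_zero
  have hroots1 : (X + 1 : ℂ[X]).roots = {-1} := by
    rw [show (X + 1 : ℂ[X]) = X - C (-1) by simp, Polynomial.roots_X_sub_C]
  rw [Polynomial.roots_mul (mul_ne_zero (pow_ne_zero _ hXne) (mul_ne_zero ha hq)),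
    Polynomial.roots_mul (mul_ne_zero ha hq), Polynomial.roots_pow, hroots1,
    Multiset.nsmul_singleton, Polynomial.roots_X_sub_C, ← add_assoc]
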